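/- Let D be an m×n real matrix and w ∈ ℝᵐ a vector with nonnegative entries. Then the function α ↦ -∑ᵢ wᵢ · log(φ((Dα)ᵢ)) is convex on ℝⁿ, where φ is the logistic function. -/

import Mathlib

/-! The logistic function is `Real.sigmoid`. Since `σ' = σ (1 - σ)`, the function `-log ∘ σ` has
derivative `σ - 1`, which is monotone, so `-log ∘ σ` is convex. The objective is a nonnegative
combination of its compositions with the linear forms `α ↦ (D α)ᵢ`. -/

open Real Set

section

variable {𝕜 E β ι : Type*} [Semiring 𝕜] [PartialOrder 𝕜] [AddCommMonoid E] [SMul 𝕜 E]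
  [AddCommMonoid β] [PartialOrder β] [IsOrderedAddMonoid β] [Module 𝕜 β]

theorem ConvexOn.sum {s : Set E} {t : Finset ι} {f : ι → E → β} (hs : Convex 𝕜 s)
    (hf : ∀ i ∈ t, ConvexOn 𝕜 s (f i)) : ConvexOn 𝕜 s fun x => ∑ i ∈ t, f i x := by
  simpa only [← Finset.sum_apply] using
    Finset.sum_induction f (ConvexOn 𝕜 s) (fun _ _ => ConvexOn.add) (convexOn_const 0 hs) hf

end

namespace Real

theorem hasDerivAt_neg_log_sigmoid (x : ℝ) :
    HasDerivAt (fun x => -log (sigmoid x)) (sigmoid x - 1) x := by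
  refine ((hasDerivAt_sigmoid x).log (sigmoid_pos x).ne').neg.congr_deriv ?_
  rw [mul_div_cancel_left₀ _ (sigmoid_pos x).ne', neg_sub]

theorem convexOn_neg_log_sigmoid : ConvexOn ℝ univ fun x => -log (sigmoid x) := by
  have hderiv : deriv (fun x => -log (sigmoid x)) = fun x => sigmoid x - 1 :=
    funext fun x => (hasDerivAt_neg_log_sigmoid x).deriv
  refine Monotone.convexOn_univ_of_deriv
    (fun x => (hasDerivAt_neg_log_sigmoid x).differentiableAt) ?_
  rw [hderiv]
  exact fun _ _ hxy => sub_le_sub_right (sigmoid_monotone hxy) 1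

end Real

theorem neg_weighted_log_logistic_convex {m n : ℕ}
    (D : Matrix (Fin m) (Fin n) ℝ) (w : Fin m → ℝ) (hw : ∀ i, 0 ≤ w i) :
    ConvexOn ℝ Set.univ
      (fun α : Fin n → ℝ =>
        -∑ i, w i * Real.log (1 / (1 + Real.exp (-(D.mulVec α i))))) := by
  have hterm (i : Fin m) :
      ConvexOn ℝ univ fun α : Fin n → ℝ => w i * -log (sigmoid (D.mulVec α i)) :=
    ConvexOn.smul (hw i) <|
      convexOn_neg_log_sigmoid.comp_linearMap
        ((LinearMap.proj i : (Fin m → ℝ) →ₗ[ℝ] ℝ) ∘ₗ D.mulVecLin)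
  simpa only [one_div, ← sigmoid_def, mul_neg, Finset.sum_neg_distrib] using
    ConvexOn.sum convex_univ fun i _ => hterm i
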